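/- Suppose b² ≠ 4 and a = (b² + b√(b²−4))/2 (for a fixed square root √(b²−4)). Then x = √2/√(−b − √(b²−4)) satisfies both x⁴ + b x² + 1 = 0 and H_F(x,0,1) = 0, where H_F is the Hessian determinant of F(x,y,z) = x⁴ + y⁴ + z⁴ + a x² y² + b(x²+y²)z². Hence [x : 0 : 1] is a flex point of C_{a,b}. -/

import Mathlib

/-!
From `x² (-b - s) = 2` and `s² = b² - 4` one gets `x² = (-b + s)/2`, a root of `t² + b t + 1`,
and then `a x² = b (s² - b²)/4 = -b`. At `(x, 0, 1)` every second derivative of `F` mixing `y`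
with another variable vanishes, so the Hessian determinant there is `F_yy` times the `(x, z)`
minor, and `F_yy = 2 a x² + 2 b = 0`.
-/

open MvPolynomial

/-- The Kuribayashi quartic with two parameters:
`F = x⁴ + y⁴ + z⁴ + a x² y² + b (x² + y²) z²`. -/
noncomputable def Fab (a b : ℂ) : MvPolynomial (Fin 3) ℂ :=
  X 0 ^ 4 + X 1 ^ 4 + X 2 ^ 4 + C a * X 0 ^ 2 * X 1 ^ 2 +
    C b * (X 0 ^ 2 + X 1 ^ 2) * X 2 ^ 2

/-- The Hessian determinant of `Fab a b`. -/
noncomputable def Hab (a b : ℂ) : MvPolynomial (Fin 3) ℂ :=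
  Matrix.det (Matrix.of fun i j : Fin 3 => pderiv i (pderiv j (Fab a b)))

@[simp]
theorem Derivation.map_ofNat {R A M : Type*} [CommSemiring R] [CommSemiring A] [Algebra R A]
    [AddCommMonoid M] [Module A M] [Module R M] (D : Derivation R A M) (n : ℕ) [n.AtLeastTwo] :
    D (ofNat(n) : A) = 0 :=
  D.map_natCast n

theorem eval_Hab_x_axis (a b x : ℂ) :
    eval ![x, 0, 1] (Hab a b) =
      (2 * a * x ^ 2 + 2 * b) * ((12 * x ^ 2 + 2 * b) * (12 + 2 * b * x ^ 2) - (4 * b * x) ^ 2) := by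
  rw [Hab, Matrix.det_fin_three]
  simp [Fab, pderiv_X, Pi.single_apply]
  ring

theorem sq_eq_of_mul_neg_sub_eq_two {b s x : ℂ} (hs : s ^ 2 = b ^ 2 - 4)
    (hx : x ^ 2 * (-b - s) = 2) : x ^ 2 = (-b + s) / 2 := by
  linear_combination ((-b + s) / 4) * hx + (x ^ 2 / 4) * hs

theorem flex_on_x_axis_general (a b s x : ℂ)
    (hs : s ^ 2 = b ^ 2 - 4) (ha : a = (b ^ 2 + b * s) / 2)
    (hx : x ^ 2 * (-b - s) = 2) :
    x ^ 4 + b * x ^ 2 + 1 = 0 ∧ eval ![x, 0, 1] (Hab a b) = 0 := by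
  have hx2 : x ^ 2 = (-b + s) / 2 := sq_eq_of_mul_neg_sub_eq_two hs hx
  refine ⟨by linear_combination (x ^ 2 + (-b + s) / 2 + b) * hx2 + hs / 4, ?_⟩
  have hFyy : 2 * a * x ^ 2 + 2 * b = 0 := by
    rw [ha, hx2]
    linear_combination (b / 2) * hs
  rw [eval_Hab_x_axis, hFyy, zero_mul]

/-- If `a = (b² + b√(b²-4))/2` then `x = √2/√(-b - √(b²-4))` satisfies
`x⁴ + bx² + 1 = 0` and `H_F(x,0,1) = 0`, so `[x:0:1]` is a flex point of `C_{a,b}`. -/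
theorem flex_on_x_axis (a b s x : ℂ) (hb : b ≠ 0) (hb4 : b ^ 2 ≠ 4)
    (hs : s ^ 2 = b ^ 2 - 4) (ha : a = (b ^ 2 + b * s) / 2)
    (hx : x ^ 2 * (-b - s) = 2) :
    x ^ 4 + b * x ^ 2 + 1 = 0 ∧ eval ![x, 0, 1] (Hab a b) = 0 :=
  flex_on_x_axis_general a b s x hs ha hx
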